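/- arXiv:2408.00648 — 2 statements merged into one kernel-verified Lean document; each statement's English description precedes it below -/
import Mathlib

section
/- For every real β > 0 and every integer m ≥ 1, the ratio (β^m/m!) / (∑_{n≥m} β^n/n!) is at least β/(e^β − 1). -/
/-!
For `m ≥ 1` we have `(m + k)! ≥ m! (k + 1)!`, i.e. `(m + 1) ⋯ (m + k) ≥ 2 ⋯ (k + 1)`. Termwise this gives
`β ∑ₖ β^(m+k)/(m+k)! ≤ (β^m/m!) ∑ₖ β^(k+1)/(k+1)! = (β^m/m!) (e^β - 1)`,
which is the claim after cross-multiplying.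
-/

open Nat

theorem Nat.factorial_mul_factorial_succ_le_factorial_add {m : ℕ} (hm : 1 ≤ m) (k : ℕ) :
    m ! * (k + 1)! ≤ (m + k)! := by
  have hsucc_factorial : (k + 1)! = (2 : ℕ).ascFactorial k := by
    simpa [add_comm] using (factorial_mul_ascFactorial 1 k).symm
  rw [hsucc_factorial, ← factorial_mul_ascFactorial]
  exact Nat.mul_le_mul_left _ (ascFactorial_le k (by omega))

theorem Real.hasSum_pow_succ_div_factorial (x : ℝ) :
    HasSum (fun k : ℕ => x ^ (k + 1) / (k + 1)!) (Real.exp x - 1) := by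
  simpa [← Real.exp_eq_exp_ℝ] using
    (hasSum_nat_add_iff' 1).mpr (NormedSpace.expSeries_div_hasSum_exp x)

theorem Real.summable_pow_add_div_factorial (x : ℝ) (m : ℕ) :
    Summable (fun k : ℕ => x ^ (m + k) / (m + k)!) :=
  (Real.summable_pow_div_factorial x).comp_injective (add_right_injective m)

theorem Real.mul_pow_add_div_factorial_le {x : ℝ} (hx : 0 ≤ x) {m : ℕ} (hm : 1 ≤ m) (k : ℕ) :
    x * (x ^ (m + k) / (m + k)!) ≤ x ^ m / m ! * (x ^ (k + 1) / (k + 1)!) := by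
  have hfact : (m ! * (k + 1)! : ℝ) ≤ (m + k)! := by
    exact_mod_cast factorial_mul_factorial_succ_le_factorial_add hm k
  have hlhs : x * (x ^ (m + k) / (m + k)!) = x ^ (m + k + 1) / (m + k)! := by ring
  have hrhs : x ^ m / m ! * (x ^ (k + 1) / (k + 1)!) = x ^ (m + k + 1) / (m ! * (k + 1)!) := by
    ring
  rw [hlhs, hrhs]
  exact div_le_div_of_nonneg_left (by positivity) (by positivity) hfact

theorem Real.mul_tsum_pow_add_div_factorial_le {x : ℝ} (hx : 0 ≤ x) {m : ℕ} (hm : 1 ≤ m) :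
    x * ∑' k : ℕ, x ^ (m + k) / (m + k)! ≤ x ^ m / m ! * (Real.exp x - 1) := by
  have htail := summable_pow_add_div_factorial x m
  rw [← htail.tsum_mul_left]
  exact hasSum_le (mul_pow_add_div_factorial_le hx hm) (htail.mul_left x).hasSum
    ((hasSum_pow_succ_div_factorial x).mul_left _)

/-- For every real `β > 0` and every integer `m ≥ 1`, the ratio
`(β^m/m!) / (∑_{n ≥ m} β^n/n!)` is at least `β/(e^β − 1)`. -/
theorem poisson_tail_ratio_bound (β : ℝ) (hβ : 0 < β) (m : ℕ) (hm : 1 ≤ m) :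
    (β ^ m / m.factorial) / (∑' k : ℕ, β ^ (m + k) / (m + k).factorial) ≥
      β / (Real.exp β - 1) := by
  have hterm_pos (k : ℕ) : 0 < β ^ (m + k) / (m + k)! := by positivity
  have htail_pos : 0 < ∑' k : ℕ, β ^ (m + k) / (m + k)! :=
    (Real.summable_pow_add_div_factorial β m).tsum_pos (fun k => (hterm_pos k).le) 0 (hterm_pos 0)
  have hexp_pos : 0 < Real.exp β - 1 := by linarith [Real.add_one_lt_exp hβ.ne']
  rw [ge_iff_le, div_le_div_iff₀ hexp_pos htail_pos]
  exact Real.mul_tsum_pow_add_div_factorial_le hβ.le hm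
end

section
/- Let μ and ν be probability measures on a countable set C, with μ(c) proportional to w(c) and ν(c) proportional to w(c)·θ^{𝓛(c)} for a positive weight w and 𝓛: C → ℕ. Suppose C is partitioned into cells {c} ∪ Ex(c) indexed by 'minimal' elements c, and within each cell |𝓛(c̄) − 𝓛(c)| ≤ |c̄| − |c| for all c̄ ∈ Ex(c). If for the θ = 1 measure (with β replaced by β⁺ = θ̂β) one has μ_{β⁺}(c)/μ_{β⁺}({c} ∪ Ex(c)) ≥ f⁻¹ for all minimal c, then also ν(c)/ν({c} ∪ Ex(c)) ≥ f⁻¹ where the ν-weights use intensity β. -/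
lemma zpow_le_max_aux (θ : ℝ) (hθ : 0 < θ) (m d : ℤ) (hmd : |m| ≤ d) :
    θ ^ m ≤ (max θ θ⁻¹) ^ d := by
  set θh := max θ θ⁻¹ with hdef
  have hθh0 : 0 < θh := lt_max_of_lt_left hθ
  have hθh1 : 1 ≤ θh := by
    rcases le_total 1 θ with h | h
    · exact le_max_of_le_left h
    · exact le_max_of_le_right (one_le_inv_iff₀.mpr ⟨hθ, h⟩)
  have h1 : θ ^ m ≤ θh ^ |m| := by
    rcases le_or_gt 0 m with h | h
    · obtain ⟨n, rfl⟩ := Int.eq_ofNat_of_zero_le h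
      rw [abs_of_nonneg h, zpow_natCast, zpow_natCast]
      exact pow_le_pow_left₀ hθ.le (le_max_left _ _) n
    · obtain ⟨n, rfl⟩ : ∃ n : ℕ, m = -n := ⟨(-m).toNat, by omega⟩
      rw [abs_of_neg h, neg_neg, zpow_neg, zpow_natCast, zpow_natCast, ← inv_pow]
      exact pow_le_pow_left₀ (inv_pos.mpr hθ).le (le_max_right _ _) n
  exact h1.trans (zpow_le_zpow_right₀ hθh1 hmd)

/-- Abstract version of Lemma 2.2 (MinEstimate): within each cell `{c} ∪ Ex(c)` of
minimal configurations, the Lipschitz property of the loop count transfers the cell-wise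
mass ratio bound from the unweighted (`θ = 1`) measure at intensity `β⁺ = θ̂β` to the
`θ`-weighted measure at intensity `β`. -/
theorem weighted_cell_ratio_bound {C : Type*} [Countable C]
    (β θ θh f : ℝ) (hβ : 0 < β) (hθ : 0 < θ) (hf : 0 < f)
    (hθh : θh = max θ θ⁻¹)
    (w : C → ℝ) (hw : ∀ c, 0 < w c) (size : C → ℕ) (L : C → ℕ)
    (Cmin : Set C) (Ex : C → Set C)
    (W : ℝ → C → ℝ) (hW : ∀ b c, W b c = w c * b ^ size c)
    (hsize : ∀ c ∈ Cmin, ∀ c' ∈ Ex c, size c ≤ size c')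
    (hLip : ∀ c ∈ Cmin, ∀ c' ∈ Ex c,
      |(L c' : ℤ) - (L c : ℤ)| ≤ (size c' : ℤ) - (size c : ℤ))
    (hsum : ∀ c ∈ Cmin, Summable fun c' : Ex c => W (θh * β) (c' : C))
    (hsumν : ∀ c ∈ Cmin, Summable fun c' : Ex c => W β (c' : C) * θ ^ L (c' : C))
    (hμ : ∀ c ∈ Cmin,
      W (θh * β) c / (W (θh * β) c + ∑' c' : Ex c, W (θh * β) (c' : C)) ≥ f⁻¹) :
    ∀ c ∈ Cmin,
      (W β c * θ ^ L c) /
          (W β c * θ ^ L c + ∑' c' : Ex c, W β (c' : C) * θ ^ L (c' : C)) ≥ f⁻¹ := by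
  intro c hc
  have hθh0 : 0 < θh := hθh ▸ lt_max_of_lt_left hθ
  -- scaling constant
  set k : ℝ := θ ^ L c / θh ^ size c with hk
  have hk0 : 0 < k := div_pos (pow_pos hθ _) (pow_pos hθh0 _)
  set A := W β c * θ ^ L c with hA
  set A' := W (θh * β) c with hA'
  have hA'pos : 0 < A' := by
    rw [hA', hW]
    exact mul_pos (hw c) (pow_pos (mul_pos hθh0 hβ) _)
  have hApos : 0 < A := mul_pos (by rw [hW]; exact mul_pos (hw c) (pow_pos hβ _)) (pow_pos hθ _)
  have hAk : A = k * A' := by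
    rw [hA, hA', hW, hW, hk, mul_pow]
    field_simp
  -- pointwise bound on the excited terms
  have hpt : ∀ c' : Ex c, W β (c' : C) * θ ^ L (c' : C) ≤ k * W (θh * β) (c' : C) := by
    intro ⟨c', hc'⟩
    simp only
    have hle := hsize c hc c' hc'
    have hlip := hLip c hc c' hc'
    have key : (θ : ℝ) ^ ((L c' : ℤ) - (L c : ℤ)) ≤ θh ^ ((size c' : ℤ) - (size c : ℤ)) := by
      rw [hθh]
      exact zpow_le_max_aux θ hθ _ _ hlip
    have hwc' := (hw c').le
    rw [hW, hW, hk]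
    have expand : w c' * (θh * β) ^ size c' = w c' * θh ^ size c' * β ^ size c' := by
      rw [mul_pow]; ring
    rw [expand]
    rw [div_mul_eq_mul_div, le_div_iff₀ (pow_pos hθh0 _)]
    have h1 : θ ^ L c' * θh ^ size c ≤ θ ^ L c * θh ^ size c' := by
      have := mul_le_mul_of_nonneg_left key (le_of_lt (mul_pos (pow_pos hθ (L c)) (pow_pos hθh0 (size c))))
      have e1 : θ ^ L c * θh ^ size c * θ ^ ((L c' : ℤ) - (L c : ℤ))
          = θ ^ L c' * θh ^ size c := by
        rw [zpow_sub₀ hθ.ne', ← zpow_natCast θ (L c'), ← zpow_natCast θ (L c)]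
        field_simp
      have e2 : θ ^ L c * θh ^ size c * θh ^ ((size c' : ℤ) - (size c : ℤ))
          = θ ^ L c * θh ^ size c' := by
        rw [zpow_sub₀ hθh0.ne', ← zpow_natCast θh (size c'), ← zpow_natCast θh (size c)]
        field_simp
      rw [e1, e2] at this
      exact this
    calc w c' * β ^ size c' * θ ^ L c' * θh ^ size c
        = (w c' * β ^ size c') * (θ ^ L c' * θh ^ size c) := by ring
      _ ≤ (w c' * β ^ size c') * (θ ^ L c * θh ^ size c') :=
          mul_le_mul_of_nonneg_left h1 (mul_nonneg hwc' (pow_pos hβ _).le)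
      _ = θ ^ L c * (w c' * θh ^ size c' * β ^ size c') := by ring
  set S := ∑' c' : Ex c, W β (c' : C) * θ ^ L (c' : C) with hS
  set S' := ∑' c' : Ex c, W (θh * β) (c' : C) with hS'
  have hS0 : 0 ≤ S := tsum_nonneg fun ⟨c', _⟩ => by
    simp only; rw [hW]
    exact mul_nonneg (mul_nonneg (hw c').le (pow_pos hβ _).le) (pow_pos hθ _).le
  have hS'0 : 0 ≤ S' := tsum_nonneg fun ⟨c', _⟩ => by
    simp only; rw [hW]
    exact mul_nonneg (hw c').le (pow_pos (mul_pos hθh0 hβ) _).le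
  have hSle : S ≤ k * S' := by
    rw [hS', ← tsum_mul_left]
    exact Summable.tsum_le_tsum hpt (hsumν c hc) ((hsum c hc).mul_left k)
  have hμc := hμ c hc
  calc f⁻¹ ≤ A' / (A' + S') := hμc
    _ ≤ A / (A + S) := by
        have hden : 0 < A + S := by linarith
        have hden' : 0 < A' + S' := by linarith
        rw [div_le_div_iff₀ hden' hden]
        have : A' * (A + S) ≤ A' * (k * (A' + S')) := by
          apply mul_le_mul_of_nonneg_left _ hA'pos.le
          rw [hAk] at *; nlinarith
        calc A' * (A + S) ≤ A' * (k * (A' + S')) := this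
          _ = A * (A' + S') := by rw [hAk]; ring
end
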